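/- arXiv:1207.4159 — 4 statements merged into one kernel-verified Lean document; each statement's English description precedes it below -/
import Mathlib

section
/- Let aₙ → a₀ uniformly on ℝ^m, where a₀ is continuous with unique global minimizer θ*, and let θ̂ₙ be a minimizer of aₙ with θ̂ₙ → θ*. Then for every δ > 0, limsupₙ sup{aₙ(θ̂ₙ) - aₙ(θ) : ‖θ - θ̂ₙ‖ ≥ δ} ≤ sup{a₀(θ*) - a₀(θ) : ‖θ - θ*‖ ≥ δ/2}, which is strictly negative when a₀ is strictly convex. -/
/-!
Outside the ball of radius `r` about the unique minimizer `θ*` of a convex function `a₀`, the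
excess `a₀ θ - a₀ θ*` is at least its minimum over the sphere of radius `r`: the radial
projection of `θ` onto that sphere lies on the segment `[θ*, θ]`. That minimum is attained by
compactness and is positive, which gives the strict negativity. For the limsup, once `θ̂ₙ` is
within `δ / 2` of `θ*`, every `θ` with `‖θ - θ̂ₙ‖ ≥ δ` has `‖θ - θ*‖ ≥ δ / 2`, and
`aₙ θ̂ₙ - aₙ θ ≤ aₙ θ* - aₙ θ` is within `2 sup |aₙ - a₀|` of `a₀ θ* - a₀ θ`.
-/

open Filter Set Metric

theorem forall_le_of_forall_ne_lt {α β : Type*} [Preorder β] {f : α → β} {c : α}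
    (hmin : ∀ θ, θ ≠ c → f c < f θ) (θ : α) : f c ≤ f θ := by
  rcases eq_or_ne θ c with rfl | hne
  exacts [le_rfl, (hmin θ hne).le]

theorem bddAbove_image_sub_of_forall_le {α : Type*} {f : α → ℝ} {c : α} (hc : ∀ θ, f c ≤ f θ)
    (s : Set α) : BddAbove ((fun θ => f c - f θ) '' s) :=
  ⟨0, by rintro _ ⟨θ, -, rfl⟩; exact sub_nonpos.2 (hc θ)⟩

variable {E : Type*} [NormedAddCommGroup E]

noncomputable def supDiffOutsideBall (f : E → ℝ) (c : E) (r : ℝ) : ℝ :=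
  sSup ((fun θ => f c - f θ) '' {θ | r ≤ ‖θ - c‖})

theorem sub_sub_le_supDiffOutsideBall {f g : E → ℝ} {c ĉ : E} {δ η : ℝ}
    (hclose : ∀ θ, dist (f θ) (g θ) < η)
    (hĉ : ∀ θ, g ĉ ≤ g θ) (hc : ∀ θ, f c ≤ f θ) (hdist : ‖ĉ - c‖ ≤ δ) {w : E}
    (hw : ‖w‖ = 2 * δ) : f c - f (c + w) - 2 * η ≤ supDiffOutsideBall g ĉ δ := by
  have hmem : δ ≤ ‖c + w - ĉ‖ := by
    have := norm_sub_norm_le w (ĉ - c)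
    rw [show c + w - ĉ = w - (ĉ - c) by abel]
    linarith
  have hS : g ĉ - g (c + w) ≤ supDiffOutsideBall g ĉ δ :=
    le_csSup (bddAbove_image_sub_of_forall_le hĉ _) ⟨c + w, hmem, rfl⟩
  have hĉ' := abs_lt.1 (hclose ĉ)
  have hw' := abs_lt.1 (hclose (c + w))
  linarith [hc ĉ]

variable [NormedSpace ℝ E]

theorem nonempty_setOf_le_norm_sub [Nontrivial E] (c : E) {r : ℝ} (hr : 0 ≤ r) :
    {θ : E | r ≤ ‖θ - c‖}.Nonempty := by
  obtain ⟨v, hv⟩ := exists_norm_eq E hr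
  exact ⟨c + v, by simp [hv]⟩

theorem ConvexOn.exists_mem_sphere_le {f : E → ℝ} (hf : ConvexOn ℝ univ f) {c θ : E} {r : ℝ}
    (hr : 0 < r) (hcθ : f c ≤ f θ) (hθ : r ≤ ‖θ - c‖) : ∃ p ∈ sphere c r, f p ≤ f θ := by
  have hpos : 0 < ‖θ - c‖ := hr.trans_le hθ
  set t := r / ‖θ - c‖
  have ht : t ∈ Icc (0 : ℝ) 1 := ⟨by positivity, (div_le_one hpos).2 hθ⟩
  refine ⟨AffineMap.lineMap c θ t, ?_, ?_⟩
  · rw [mem_sphere, dist_lineMap_left, Real.norm_eq_abs, abs_of_nonneg ht.1, dist_eq_norm',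
      div_mul_cancel₀ _ hpos.ne']
  · simpa [hcθ] using hf.le_on_segment (mem_univ c) (mem_univ θ) (lineMap_mem_segment ℝ c θ ht)

theorem ConvexOn.exists_pos_add_le_of_le_norm_sub [ProperSpace E] {f : E → ℝ}
    (hf : ConvexOn ℝ univ f) (hcont : Continuous f) {c : E} (hmin : ∀ θ, θ ≠ c → f c < f θ)
    {r : ℝ} (hr : 0 < r) : ∃ ε > 0, ∀ θ, r ≤ ‖θ - c‖ → f c + ε ≤ f θ := by
  have hsphere : ∀ p ∈ sphere c r, 0 < f p - f c := fun p hp =>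
    sub_pos.2 (hmin p (ne_of_mem_sphere hp hr.ne'))
  obtain ⟨ε, hε, hεle⟩ :=
    (isCompact_sphere c r).exists_forall_le' (f := fun p => f p - f c) (by fun_prop) hsphere
  refine ⟨ε, hε, fun θ hθ => ?_⟩
  obtain ⟨p, hp, hpθ⟩ := hf.exists_mem_sphere_le hr (forall_le_of_forall_ne_lt hmin θ) hθ
  linarith [hεle p hp]

theorem supDiffOutsideBall_neg [Nontrivial E] [ProperSpace E] {f : E → ℝ}
    (hf : ConvexOn ℝ univ f) (hcont : Continuous f) {c : E} (hmin : ∀ θ, θ ≠ c → f c < f θ)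
    {r : ℝ} (hr : 0 < r) : supDiffOutsideBall f c r < 0 := by
  obtain ⟨ε, hε, hgrowth⟩ := hf.exists_pos_add_le_of_le_norm_sub hcont hmin hr
  refine (csSup_le ((nonempty_setOf_le_norm_sub c hr.le).image _) ?_).trans_lt (neg_neg_of_pos hε)
  rintro _ ⟨θ, hθ, rfl⟩
  linarith [hgrowth θ hθ]

theorem supDiffOutsideBall_le_add [Nontrivial E] {f g : E → ℝ} {c ĉ : E} {δ η : ℝ} (hδ : 0 ≤ δ)
    (hclose : ∀ θ, dist (f θ) (g θ) < η) (hĉ : g ĉ ≤ g c) (hc : ∀ θ, f c ≤ f θ)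
    (hdist : ‖ĉ - c‖ ≤ δ / 2) :
    supDiffOutsideBall g ĉ δ ≤ supDiffOutsideBall f c (δ / 2) + 2 * η := by
  refine csSup_le ((nonempty_setOf_le_norm_sub ĉ hδ).image _) ?_
  rintro _ ⟨θ, hθ, rfl⟩
  have hθc : δ / 2 ≤ ‖θ - c‖ := by
    have := norm_sub_le_norm_sub_add_norm_sub θ c ĉ
    change δ ≤ ‖θ - ĉ‖ at hθ
    rw [norm_sub_rev c ĉ] at this
    linarith
  have hS : f c - f θ ≤ supDiffOutsideBall f c (δ / 2) :=
    le_csSup (bddAbove_image_sub_of_forall_le hc _) ⟨θ, hθc, rfl⟩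
  have hc' := abs_lt.1 (hclose c)
  have hθ' := abs_lt.1 (hclose θ)
  linarith

theorem limsup_supDiffOutsideBall_le [Nontrivial E] {ι : Type*} {l : Filter ι} [l.NeBot]
    {g : ι → E → ℝ} {f : E → ℝ} (hunif : TendstoUniformly g f l) {c : E} (hc : ∀ θ, f c ≤ f θ)
    {ĉ : ι → E} (hĉ : ∀ i θ, g i (ĉ i) ≤ g i θ) (hconv : Tendsto ĉ l (nhds c)) {δ : ℝ}
    (hδ : 0 < δ) :
    limsup (fun i => supDiffOutsideBall (g i) (ĉ i) δ) l ≤ supDiffOutsideBall f c (δ / 2) := by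
  have hnear : ∀ᶠ i in l, ‖ĉ i - c‖ ≤ δ / 2 := by
    filter_upwards [hconv.eventually (closedBall_mem_nhds c (half_pos hδ))] with i hi
    rwa [dist_eq_norm] at hi
  have hclose := Metric.tendstoUniformly_iff.1 hunif
  obtain ⟨w, hw⟩ := exists_norm_eq E (by positivity : (0 : ℝ) ≤ 2 * δ)
  -- without a lower bound the real `limsup` is a junk value
  have hcobdd : IsCoboundedUnder (· ≤ ·) l fun i => supDiffOutsideBall (g i) (ĉ i) δ := by
    refine isCoboundedUnder_le_of_eventually_le l (x := f c - f (c + w) - 2 * 1) ?_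
    filter_upwards [hclose 1 one_pos, hnear] with i hi hdist
    exact sub_sub_le_supDiffOutsideBall hi (hĉ i) hc (hdist.trans (by linarith)) hw
  refine le_of_forall_pos_le_add fun η hη => limsup_le_of_le hcobdd ?_
  filter_upwards [hclose (η / 2) (half_pos hη), hnear] with i hi hdist
  exact (supDiffOutsideBall_le_add hδ.le hi (hĉ i c) hc hdist).trans_eq (by ring)

theorem stmt11_general {m : ℕ} (hm : 0 < m) (a : ℕ → EuclideanSpace ℝ (Fin m) → ℝ)
    (a₀ : EuclideanSpace ℝ (Fin m) → ℝ)
    (hcont : Continuous a₀)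
    (hunif : TendstoUniformly a a₀ atTop)
    (hconv : StrictConvexOn ℝ Set.univ a₀)
    (θs : EuclideanSpace ℝ (Fin m)) (hmin : ∀ θ, θ ≠ θs → a₀ θs < a₀ θ)
    (θhat : ℕ → EuclideanSpace ℝ (Fin m))
    (hargmin : ∀ n, ∀ θ, a n (θhat n) ≤ a n θ)
    (hconsist : Tendsto θhat atTop (nhds θs))
    (δ : ℝ) (hδ : 0 < δ) :
    limsup (fun n => sSup ((fun θ => a n (θhat n) - a n θ) ''
        {θ | δ ≤ ‖θ - θhat n‖})) atTop ≤
      sSup ((fun θ => a₀ θs - a₀ θ) '' {θ | δ / 2 ≤ ‖θ - θs‖}) ∧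
    sSup ((fun θ => a₀ θs - a₀ θ) '' {θ | δ / 2 ≤ ‖θ - θs‖}) < 0 := by
  have : Nonempty (Fin m) := ⟨⟨0, hm⟩⟩
  exact ⟨limsup_supDiffOutsideBall_le hunif (forall_le_of_forall_ne_lt hmin) hargmin hconsist hδ,
    supDiffOutsideBall_neg hconv.convexOn hcont hmin (half_pos hδ)⟩

/-- Condition (iii') for Laplace's method: if `aₙ → a₀` uniformly, `a₀` is continuous and
strictly convex with unique global minimizer `θ*`, and the minimizers `θ̂ₙ` of `aₙ` converge to
`θ*`, then for every `δ > 0` the limsup of `sup{aₙ(θ̂ₙ) - aₙ(θ) : ‖θ - θ̂ₙ‖ ≥ δ}` is at most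
`sup{a₀(θ*) - a₀(θ) : ‖θ - θ*‖ ≥ δ/2}`, which is strictly negative. -/
theorem stmt11 {m : ℕ} (hm : 0 < m) (a : ℕ → EuclideanSpace ℝ (Fin m) → ℝ)
    (a₀ : EuclideanSpace ℝ (Fin m) → ℝ)
    (hacont : ∀ n, Continuous (a n)) (hcont : Continuous a₀)
    (hunif : TendstoUniformly a a₀ atTop)
    (hconv : StrictConvexOn ℝ Set.univ a₀)
    (θs : EuclideanSpace ℝ (Fin m)) (hmin : ∀ θ, θ ≠ θs → a₀ θs < a₀ θ)
    (θhat : ℕ → EuclideanSpace ℝ (Fin m))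
    (hargmin : ∀ n, ∀ θ, a n (θhat n) ≤ a n θ)
    (hconsist : Tendsto θhat atTop (nhds θs))
    (δ : ℝ) (hδ : 0 < δ) :
    limsup (fun n => sSup ((fun θ => a n (θhat n) - a n θ) ''
        {θ | δ ≤ ‖θ - θhat n‖})) atTop ≤
      sSup ((fun θ => a₀ θs - a₀ θ) '' {θ | δ / 2 ≤ ‖θ - θs‖}) ∧
    sSup ((fun θ => a₀ θs - a₀ θ) '' {θ | δ / 2 ≤ ‖θ - θs‖}) < 0 :=
  stmt11_general hm a a₀ hcont hunif hconv θs hmin θhat hargmin hconsist δ hδ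
end

section
/- Let ψ : ℝ → ℝ be smooth with ψ'' > 0 everywhere, v ∈ ℝ, and a(θ) = ψ(θ) - θv with unique minimizer θ̂ (so ψ'(θ̂) = v). Assume e^{-a} is integrable and a(θ) - a(θ̂) ≥ c‖θ - θ̂‖ outside a compact set for some c > 0. Then (n ψ''(θ̂)/(2π))^{1/2} e^{n a(θ̂)} ∫ e^{-n a(θ)} dθ → 1 as n → ∞ (one-dimensional Laplace approximation of the normalizing constant). -/
open Filter MeasureTheory Real

/-- Linear lower bound from a lower bound on the derivative. -/
lemma linBound {g g' : ℝ → ℝ} (hg : ∀ u, HasDerivAt g (g' u) u) {x y m : ℝ} (hxy : x ≤ y)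
    (hm : ∀ u ∈ Set.Icc x y, m ≤ g' u) : m * (y - x) ≤ g y - g x := by
  refine (convex_Icc x y).mul_sub_le_image_sub_of_le_deriv
    (fun u _ => (hg u).continuousAt.continuousWithinAt)
    (fun u _ => (hg u).differentiableAt.differentiableWithinAt)
    (fun u hu => by rw [(hg u).deriv]; exact hm u (interior_subset hu))
    x ⟨le_rfl, hxy⟩ y ⟨hxy, le_rfl⟩ hxy

/-- Linear upper bound from an upper bound on the derivative. -/
lemma linBoundUpper {g g' : ℝ → ℝ} (hg : ∀ u, HasDerivAt g (g' u) u) {x y M : ℝ} (hxy : x ≤ y)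
    (hM : ∀ u ∈ Set.Icc x y, g' u ≤ M) : g y - g x ≤ M * (y - x) := by
  refine (convex_Icc x y).image_sub_le_mul_sub_of_deriv_le
    (fun u _ => (hg u).continuousAt.continuousWithinAt)
    (fun u _ => (hg u).differentiableAt.differentiableWithinAt)
    (fun u hu => by rw [(hg u).deriv]; exact hM u (interior_subset hu))
    x ⟨le_rfl, hxy⟩ y ⟨hxy, le_rfl⟩ hxy

/-- Quadratic lower bound via a lower bound on the second derivative. -/
lemma quadLower {f f' f'' : ℝ → ℝ} (hf : ∀ u, HasDerivAt f (f' u) u)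
    (hf' : ∀ u, HasDerivAt f' (f'' u) u) (x h m : ℝ)
    (hm : ∀ u, |u - x| ≤ |h| → m ≤ f'' u) :
    f x + f' x * h + m * h ^ 2 / 2 ≤ f (x + h) := by
  have hG : ∀ t : ℝ, HasDerivAt (fun t : ℝ => f (x + t) - f x - f' x * t - m * t ^ 2 / 2)
      (f' (x + t) - f' x - m * t) t := by
    intro t
    have h1 : HasDerivAt (fun t : ℝ => f (x + t)) (f' (x + t)) t := by
      simpa [Function.comp_def] using (hf (x + t)).comp t ((hasDerivAt_id t).const_add x)
    have h2 : HasDerivAt (fun t : ℝ => f' x * t) (f' x) t := by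
      simpa using (hasDerivAt_id t).const_mul (f' x)
    have h3 : HasDerivAt (fun t : ℝ => m * t ^ 2 / 2) (m * t) t := by
      have := ((hasDerivAt_pow 2 t).const_mul m).div_const 2
      exact this.congr_deriv (by ring)
    exact ((h1.sub_const (f x)).sub h2).sub h3
  rcases le_total 0 h with hh | hh
  · have key := linBound hG (x := 0) (y := h) (m := 0) hh ?_
    · simp only [mul_zero, zero_mul, sub_zero, zero_pow, add_zero, zero_add, zero_div,
        mul_one] at key
      nlinarith [key]
    · intro t ht
      have hxt : x ≤ x + t := by linarith [ht.1]
      have hlin := linBound hf' (x := x) (y := x + t) (m := m) hxt ?_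
      · nlinarith [hlin]
      · intro u hu
        apply hm
        rw [abs_of_nonneg hh]
        rw [abs_le]
        constructor <;> [linarith [hu.1, ht.1, hh]; linarith [hu.2, ht.2]]
  · have key := linBoundUpper hG (x := h) (y := 0) (M := 0) hh ?_
    · simp only [mul_zero, zero_mul, sub_zero, zero_pow, add_zero, zero_add, zero_div,
        mul_one] at key
      nlinarith [key]
    · intro t ht
      have hxt : x + t ≤ x := by linarith [ht.2]
      have hlin := linBound hf' (x := x + t) (y := x) (m := m) hxt ?_
      · nlinarith [hlin]
      · intro u hu
        apply hm
        rw [abs_of_nonpos hh]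
        rw [abs_le]
        constructor <;> [linarith [hu.1, ht.1]; linarith [hu.2, ht.2, hh]]

/-- Quadratic upper bound via an upper bound on the second derivative. -/
lemma quadUpper {f f' f'' : ℝ → ℝ} (hf : ∀ u, HasDerivAt f (f' u) u)
    (hf' : ∀ u, HasDerivAt f' (f'' u) u) (x h M : ℝ)
    (hM : ∀ u, |u - x| ≤ |h| → f'' u ≤ M) :
    f (x + h) ≤ f x + f' x * h + M * h ^ 2 / 2 := by
  have := quadLower (f := fun u => -f u) (f' := fun u => -f' u) (f'' := fun u => -f'' u)
    (fun u => (hf u).neg) (fun u => (hf' u).neg) x h (-M)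
    (fun u hu => neg_le_neg (hM u hu))
  linarith

/-- `exp (-b * |x|)` is integrable for `b > 0`. -/
lemma integrable_exp_neg_mul_abs' {b : ℝ} (hb : 0 < b) :
    Integrable (fun s : ℝ => Real.exp (-b * |s|)) := by
  have h1 : IntegrableOn (fun s : ℝ => Real.exp (-b * |s|)) (Set.Ioi (0 : ℝ)) :=
    (exp_neg_integrableOn_Ioi 0 hb).congr_fun
      (fun s hs => by rw [abs_of_pos hs]) measurableSet_Ioi
  have h2 : IntegrableOn (fun s : ℝ => Real.exp (-b * |s|)) (Set.Iic (0 : ℝ)) := by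
    rw [← Measure.map_neg_eq_self (volume : Measure ℝ)]
    have m : MeasurableEmbedding fun x : ℝ => -x := (Homeomorph.neg ℝ).measurableEmbedding
    rw [m.integrableOn_map_iff]
    simp_rw [Function.comp_def, abs_neg, Set.neg_preimage, Set.neg_Iic, neg_zero]
    exact Iff.mpr integrableOn_Ici_iff_integrableOn_Ioi h1
  rw [← integrableOn_univ, ← Set.Iic_union_Ioi (a := (0 : ℝ))]
  exact h2.union h1

set_option maxHeartbeats 1000000 in
/-- One-dimensional Laplace approximation of the normalizing constant: for
`a(θ) = ψ(θ) - θv` with `ψ` smooth, `ψ'' > 0`, minimizer `θ̂` with `ψ'(θ̂) = v`,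
`e^{-a}` integrable and linear growth of `a - a(θ̂)` outside a compact set,
`(n ψ''(θ̂)/(2π))^{1/2} e^{n a(θ̂)} ∫ e^{-n a(θ)} dθ → 1`. -/
theorem stmt12 (ψ : ℝ → ℝ) (hψ : ContDiff ℝ (⊤ : ℕ∞) ψ)
    (hpos : ∀ x, 0 < deriv (deriv ψ) x)
    (v θhat : ℝ) (hcrit : deriv ψ θhat = v)
    (hint : Integrable (fun θ => Real.exp (-(ψ θ - θ * v))) (volume : Measure ℝ))
    (c : ℝ) (hc : 0 < c) (K : Set ℝ) (hK : IsCompact K)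
    (hgrowth : ∀ θ ∉ K,
      c * |θ - θhat| ≤ (ψ θ - θ * v) - (ψ θhat - θhat * v)) :
    Tendsto (fun n : ℕ =>
        Real.sqrt ((n : ℝ) * deriv (deriv ψ) θhat / (2 * π)) *
          Real.exp ((n : ℝ) * (ψ θhat - θhat * v)) *
          ∫ θ : ℝ, Real.exp (-(n : ℝ) * (ψ θ - θ * v)))
      atTop (nhds 1) := by
  -- basic differentiability facts
  have hψ' : ContDiff ℝ (((⊤ : ℕ∞)) : WithTop ℕ∞) ψ := hψ.of_le (by simp)
  obtain ⟨hψd, hψ1⟩ := contDiff_infty_iff_deriv.mp hψ'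
  obtain ⟨hψ1d, hψ2⟩ := contDiff_infty_iff_deriv.mp hψ1
  have hcont2 : Continuous (deriv (deriv ψ)) := hψ2.continuous
  have hd1 : ∀ u, HasDerivAt ψ (deriv ψ u) u := fun u => (hψd u).hasDerivAt
  have hd2 : ∀ u, HasDerivAt (deriv ψ) (deriv (deriv ψ) u) u := fun u => (hψ1d u).hasDerivAt
  set A := deriv (deriv ψ) θhat with hAdef
  have hApos : 0 < A := hpos θhat
  have hπ : (0 : ℝ) < π := Real.pi_pos
  -- minimum of ψ'' on [θhat-1, θhat+1]
  obtain ⟨u0, hu0mem, hu0min⟩ := (isCompact_Icc :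
      IsCompact (Set.Icc (θhat - 1) (θhat + 1))).exists_isMinOn
    ⟨θhat, by constructor <;> linarith⟩ hcont2.continuousOn
  set m := deriv (deriv ψ) u0 with hmdef
  have hmpos : 0 < m := hpos u0
  have hmle : ∀ u ∈ Set.Icc (θhat - 1) (θhat + 1), m ≤ deriv (deriv ψ) u :=
    fun u hu => hu0min hu
  -- the recentered function
  set P : ℝ → ℝ := fun h => ψ (θhat + h) - ψ θhat - h * v with hPdef
  have hlow : ∀ h μ : ℝ, (∀ u, |u - θhat| ≤ |h| → μ ≤ deriv (deriv ψ) u) →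
      μ * h ^ 2 / 2 ≤ P h := by
    intro h μ hμ
    have := quadLower hd1 hd2 θhat h μ hμ
    rw [hcrit] at this
    simp only [hPdef]
    linarith
  have hupp : ∀ h μ : ℝ, (∀ u, |u - θhat| ≤ |h| → deriv (deriv ψ) u ≤ μ) →
      P h ≤ μ * h ^ 2 / 2 := by
    intro h μ hμ
    have := quadUpper hd1 hd2 θhat h μ hμ
    rw [hcrit] at this
    simp only [hPdef]
    linarith
  have hB1 : ∀ h : ℝ, |h| ≤ 1 → m * h ^ 2 / 2 ≤ P h := by
    intro h hh
    refine hlow h m (fun u hu => hmle u ?_)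
    have := abs_le.mp (le_trans hu hh)
    constructor <;> linarith [this.1, this.2]
  have hB3 : ∀ h : ℝ, 1 ≤ |h| → m * |h| / 2 ≤ P h := by
    intro h hh
    rcases le_or_gt 1 h with h1 | h1
    · have hB1one : m * 1 ^ 2 / 2 ≤ P 1 := hB1 1 (by norm_num)
      have hder : v + m ≤ deriv ψ (θhat + 1) := by
        have := linBound hd2 (x := θhat) (y := θhat + 1) (m := m) (by linarith)
          (fun u hu => hmle u ⟨by linarith [hu.1], by linarith [hu.2]⟩)
        rw [hcrit] at this
        linarith
      have hconv := quadLower hd1 hd2 (θhat + 1) (h - 1) 0 (fun u _ => (hpos u).le)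
      rw [show θhat + 1 + (h - 1) = θhat + h by ring] at hconv
      have hprod := mul_le_mul_of_nonneg_right hder (by linarith : (0 : ℝ) ≤ h - 1)
      rw [abs_of_nonneg (by linarith : (0 : ℝ) ≤ h)]
      simp only [hPdef] at hB1one ⊢
      nlinarith [mul_nonneg hmpos.le (by linarith : (0 : ℝ) ≤ h - 1)]
    · have hneg : h ≤ -1 := by
        rcases abs_cases h with ⟨he, _⟩ | ⟨he, _⟩ <;> linarith
      have hB1negone : m * (-1 : ℝ) ^ 2 / 2 ≤ P (-1) := hB1 (-1) (by norm_num)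
      have hder : deriv ψ (θhat + -1) ≤ v - m := by
        have := linBound hd2 (x := θhat + -1) (y := θhat) (m := m) (by linarith)
          (fun u hu => hmle u ⟨by linarith [hu.1], by linarith [hu.2]⟩)
        rw [hcrit] at this
        linarith
      have hconv := quadLower hd1 hd2 (θhat + -1) (h + 1) 0 (fun u _ => (hpos u).le)
      rw [show θhat + -1 + (h + 1) = θhat + h by ring] at hconv
      have hprod := mul_le_mul_of_nonpos_right hder (by linarith : h + 1 ≤ (0 : ℝ))
      rw [abs_of_neg (by linarith : h < 0)]
      simp only [hPdef] at hB1negone ⊢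
      nlinarith [mul_nonneg hmpos.le (by linarith : (0 : ℝ) ≤ -(h + 1))]
  -- step 1: rewriting the integral
  have hstep : ∀ n : ℕ, 1 ≤ n →
      (∫ θ : ℝ, Real.exp (-(n : ℝ) * (ψ θ - θ * v))) =
        Real.exp (-(n : ℝ) * (ψ θhat - θhat * v)) *
          ((Real.sqrt n)⁻¹ * ∫ s : ℝ, Real.exp (-(n : ℝ) * P ((Real.sqrt n)⁻¹ * s))) := by
    intro n hn
    have hsn : (0 : ℝ) < Real.sqrt n := Real.sqrt_pos.2 (by exact_mod_cast hn)
    calc ∫ θ : ℝ, Real.exp (-(n : ℝ) * (ψ θ - θ * v))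
        = ∫ u : ℝ, Real.exp (-(n : ℝ) * (ψ (u + θhat) - (u + θhat) * v)) :=
          (integral_add_right_eq_self (fun θ => Real.exp (-(n : ℝ) * (ψ θ - θ * v))) θhat).symm
      _ = ∫ u : ℝ, Real.exp (-(n : ℝ) * (ψ θhat - θhat * v)) * Real.exp (-(n : ℝ) * P u) := by
          congr 1
          funext u
          rw [← Real.exp_add]
          congr 1
          simp only [hPdef]
          rw [add_comm u θhat]
          ring
      _ = Real.exp (-(n : ℝ) * (ψ θhat - θhat * v)) * ∫ u : ℝ, Real.exp (-(n : ℝ) * P u) :=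
          integral_const_mul _ _
      _ = Real.exp (-(n : ℝ) * (ψ θhat - θhat * v)) *
            ((Real.sqrt n)⁻¹ * ∫ s : ℝ, Real.exp (-(n : ℝ) * P ((Real.sqrt n)⁻¹ * s))) := by
          congr 1
          rw [MeasureTheory.Measure.integral_comp_mul_left (fun u => Real.exp (-(n : ℝ) * P u)) (Real.sqrt n)⁻¹,
            inv_inv, abs_of_pos hsn, smul_eq_mul, inv_mul_cancel_left₀ hsn.ne']
  -- step 2: dominated convergence
  have key : Tendsto (fun n : ℕ => ∫ s : ℝ, Real.exp (-(n : ℝ) * P ((Real.sqrt n)⁻¹ * s)))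
      atTop (nhds (∫ s : ℝ, Real.exp (-(A / 2) * s ^ 2))) := by
    apply tendsto_integral_filter_of_dominated_convergence
      (bound := fun s => Real.exp (-(m / 2) * s ^ 2) + Real.exp (-(m / 2) * |s|))
    · apply Eventually.of_forall
      intro n
      have hPc : Continuous P := by
        simp only [hPdef]
        exact ((hψd.continuous.comp (continuous_const.add continuous_id)).sub
          continuous_const).sub (continuous_id.mul continuous_const)
      exact (Real.continuous_exp.comp
        (continuous_const.mul (hPc.comp (continuous_const.mul continuous_id)))).aestronglyMeasurable
    · filter_upwards [eventually_ge_atTop 1] with n hn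
      apply ae_of_all
      intro s
      have hsn : (0 : ℝ) < Real.sqrt n := Real.sqrt_pos.2 (by exact_mod_cast hn)
      have hn0 : (n : ℝ) ≠ 0 := by
        exact_mod_cast Nat.one_le_iff_ne_zero.mp hn
      set h : ℝ := (Real.sqrt n)⁻¹ * s with hhdef
      have hhabs : |h| = |s| / Real.sqrt n := by
        rw [hhdef, abs_mul, abs_inv, abs_of_pos hsn]
        ring
      have hn2 : (n : ℝ) * h ^ 2 = s ^ 2 := by
        rw [hhdef, mul_pow, inv_pow, Real.sq_sqrt (Nat.cast_nonneg n)]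
        field_simp
      rw [Real.norm_eq_abs, abs_of_pos (Real.exp_pos _)]
      rcases le_or_gt (|h|) 1 with hcase | hcase
      · have h1 := hB1 h hcase
        have h2 : -(n : ℝ) * P h ≤ -(m / 2) * s ^ 2 := by
          have := mul_le_mul_of_nonneg_left h1 (Nat.cast_nonneg n : (0 : ℝ) ≤ n)
          calc -(n : ℝ) * P h ≤ -((n : ℝ) * (m * h ^ 2 / 2)) := by linarith
            _ = -(m / 2) * ((n : ℝ) * h ^ 2) := by ring
            _ = -(m / 2) * s ^ 2 := by rw [hn2]
        calc Real.exp (-(n : ℝ) * P h) ≤ Real.exp (-(m / 2) * s ^ 2) := Real.exp_le_exp.mpr h2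
          _ ≤ _ := le_add_of_nonneg_right (Real.exp_pos _).le
      · have h1 := hB3 h hcase.le
        have hnh : (n : ℝ) * |h| = Real.sqrt n * |s| := by
          have hns : (n : ℝ) = Real.sqrt n * Real.sqrt n :=
            (Real.mul_self_sqrt (Nat.cast_nonneg n)).symm
          rw [hhabs]
          field_simp
          linear_combination |s| * hns
        have hsge : |s| ≤ Real.sqrt n * |s| := by
          apply le_mul_of_one_le_left (abs_nonneg s)
          rw [show (1 : ℝ) = Real.sqrt 1 from Real.sqrt_one.symm]
          exact Real.sqrt_le_sqrt (by exact_mod_cast hn)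
        have h2 : -(n : ℝ) * P h ≤ -(m / 2) * |s| := by
          have := mul_le_mul_of_nonneg_left h1 (Nat.cast_nonneg n : (0 : ℝ) ≤ n)
          have h3 : (m / 2) * |s| ≤ (m / 2) * (Real.sqrt n * |s|) :=
            mul_le_mul_of_nonneg_left hsge (by positivity)
          calc -(n : ℝ) * P h ≤ -((n : ℝ) * (m * |h| / 2)) := by linarith
            _ = -(m / 2) * ((n : ℝ) * |h|) := by ring
            _ = -(m / 2) * (Real.sqrt n * |s|) := by rw [hnh]
            _ ≤ -(m / 2) * |s| := by linarith
        calc Real.exp (-(n : ℝ) * P h) ≤ Real.exp (-(m / 2) * |s|) := Real.exp_le_exp.mpr h2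
          _ ≤ _ := le_add_of_nonneg_left (Real.exp_pos _).le
    · exact (integrable_exp_neg_mul_sq (by positivity : (0 : ℝ) < m / 2)).add
        (integrable_exp_neg_mul_abs' (by positivity))
    · apply ae_of_all
      intro s
      suffices hg : Tendsto (fun n : ℕ => (n : ℝ) * P ((Real.sqrt n)⁻¹ * s)) atTop
          (nhds (A / 2 * s ^ 2)) by
        have := (Real.continuous_exp.continuousAt (x := -(A / 2 * s ^ 2))).tendsto.comp hg.neg
        simpa [Function.comp_def, neg_mul] using this
      rw [Metric.tendsto_atTop]
      intro ε hε
      set ε₀ := ε / (s ^ 2 / 2 + 1) with hε₀def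
      have hε₀ : 0 < ε₀ := div_pos hε (by positivity)
      obtain ⟨δ, hδpos, hδ⟩ := Metric.continuousAt_iff.mp (hcont2.continuousAt (x := θhat)) ε₀ hε₀
      have hsqrtto : Tendsto (fun n : ℕ => Real.sqrt n) atTop atTop := by
        refine tendsto_atTop_atTop.2 (fun b => ⟨⌈b ^ 2⌉₊, fun n hn => ?_⟩)
        have hb2 : (b ^ 2 : ℝ) ≤ n := le_trans (Nat.le_ceil _) (by exact_mod_cast hn)
        calc b ≤ |b| := le_abs_self b
          _ = Real.sqrt (b ^ 2) := (Real.sqrt_sq_eq_abs b).symm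
          _ ≤ Real.sqrt n := Real.sqrt_le_sqrt hb2
      have hev : ∀ᶠ n : ℕ in atTop, 1 ≤ n ∧ |s| / Real.sqrt n < δ := by
        refine (eventually_ge_atTop 1).and ?_
        have h2 : Tendsto (fun n : ℕ => |s| / Real.sqrt n) atTop (nhds 0) :=
          Tendsto.div_atTop tendsto_const_nhds hsqrtto
        exact h2 (Iio_mem_nhds hδpos)
      obtain ⟨N, hN⟩ := eventually_atTop.mp hev
      refine ⟨N, fun n hn => ?_⟩
      obtain ⟨hn1, hns⟩ := hN n hn
      have hsn : (0 : ℝ) < Real.sqrt n := Real.sqrt_pos.2 (by exact_mod_cast hn1)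
      have hn0 : (n : ℝ) ≠ 0 := by exact_mod_cast Nat.one_le_iff_ne_zero.mp hn1
      set h : ℝ := (Real.sqrt n)⁻¹ * s with hhdef
      have hhabs : |h| = |s| / Real.sqrt n := by
        rw [hhdef, abs_mul, abs_inv, abs_of_pos hsn]
        ring
      have hhδ : |h| < δ := by rw [hhabs]; exact hns
      have hn2 : (n : ℝ) * h ^ 2 = s ^ 2 := by
        rw [hhdef, mul_pow, inv_pow, Real.sq_sqrt (Nat.cast_nonneg n)]
        field_simp
      have hbnd : ∀ u : ℝ, |u - θhat| ≤ |h| →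
          A - ε₀ ≤ deriv (deriv ψ) u ∧ deriv (deriv ψ) u ≤ A + ε₀ := by
        intro u hu
        have hdist : dist u θhat < δ := by rw [Real.dist_eq]; exact lt_of_le_of_lt hu hhδ
        have := hδ hdist
        rw [Real.dist_eq] at this
        have := abs_lt.mp this
        constructor <;> linarith [this.1, this.2]
      have hlo : (A - ε₀) * s ^ 2 / 2 ≤ (n : ℝ) * P h := by
        have h1 : (A - ε₀) * h ^ 2 / 2 ≤ P h := hlow h (A - ε₀) (fun u hu => (hbnd u hu).1)
        calc (A - ε₀) * s ^ 2 / 2 = (n : ℝ) * ((A - ε₀) * h ^ 2 / 2) := by rw [← hn2]; ring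
          _ ≤ (n : ℝ) * P h := mul_le_mul_of_nonneg_left h1 (Nat.cast_nonneg n)
      have hhi : (n : ℝ) * P h ≤ (A + ε₀) * s ^ 2 / 2 := by
        have h1 : P h ≤ (A + ε₀) * h ^ 2 / 2 := hupp h (A + ε₀) (fun u hu => (hbnd u hu).2)
        calc (n : ℝ) * P h ≤ (n : ℝ) * ((A + ε₀) * h ^ 2 / 2) :=
              mul_le_mul_of_nonneg_left h1 (Nat.cast_nonneg n)
          _ = (A + ε₀) * s ^ 2 / 2 := by rw [← hn2]; ring
      rw [Real.dist_eq]
      have habs : |(n : ℝ) * P h - A / 2 * s ^ 2| ≤ ε₀ * s ^ 2 / 2 :=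
        abs_le.mpr ⟨by nlinarith [hlo], by nlinarith [hhi]⟩
      have hlt : ε₀ * s ^ 2 / 2 < ε := by
        rw [hε₀def, div_mul_eq_mul_div, div_div, div_lt_iff₀ (by positivity)]
        nlinarith [sq_nonneg s, hε]
      exact lt_of_le_of_lt habs hlt
  -- step 3: conclusion
  have hgauss : (∫ s : ℝ, Real.exp (-(A / 2) * s ^ 2)) = Real.sqrt (π / (A / 2)) :=
    integral_gaussian (A / 2)
  have hprod : Real.sqrt (A / (2 * π)) * Real.sqrt (π / (A / 2)) = 1 := by
    rw [← Real.sqrt_mul (by positivity)]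
    rw [show A / (2 * π) * (π / (A / 2)) = 1 by field_simp]
    exact Real.sqrt_one
  have final := key.const_mul (Real.sqrt (A / (2 * π)))
  rw [hgauss, hprod] at final
  apply Filter.Tendsto.congr' _ final
  filter_upwards [eventually_ge_atTop 1] with n hn
  have hsn : (0 : ℝ) < Real.sqrt n := Real.sqrt_pos.2 (by exact_mod_cast hn)
  rw [hstep n hn]
  have e1 : Real.exp ((n : ℝ) * (ψ θhat - θhat * v)) *
      Real.exp (-(n : ℝ) * (ψ θhat - θhat * v)) = 1 := by
    rw [← Real.exp_add, show (n : ℝ) * (ψ θhat - θhat * v) + -(n : ℝ) * (ψ θhat - θhat * v) = 0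
      by ring, Real.exp_zero]
  have e2 : Real.sqrt ((n : ℝ) * A / (2 * π)) = Real.sqrt n * Real.sqrt (A / (2 * π)) := by
    rw [mul_div_assoc, Real.sqrt_mul (Nat.cast_nonneg n)]
  calc Real.sqrt (A / (2 * π)) * ∫ s : ℝ, Real.exp (-(n : ℝ) * P ((Real.sqrt n)⁻¹ * s))
      = (Real.exp ((n : ℝ) * (ψ θhat - θhat * v)) * Real.exp (-(n : ℝ) * (ψ θhat - θhat * v))) *
        ((Real.sqrt n * (Real.sqrt n)⁻¹) *
          (Real.sqrt (A / (2 * π)) * ∫ s : ℝ, Real.exp (-(n : ℝ) * P ((Real.sqrt n)⁻¹ * s)))) := by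
        rw [e1, mul_inv_cancel₀ hsn.ne']
        ring
    _ = Real.sqrt ((n : ℝ) * A / (2 * π)) * Real.exp ((n : ℝ) * (ψ θhat - θhat * v)) *
        (Real.exp (-(n : ℝ) * (ψ θhat - θhat * v)) *
          ((Real.sqrt n)⁻¹ * ∫ s : ℝ, Real.exp (-(n : ℝ) * P ((Real.sqrt n)⁻¹ * s)))) := by
        rw [e2]
        ring
end

section
/- Let a : ℝ^m → ℝ be smooth, strictly convex, with unique minimizer θ̂, positive definite Hessian D²a(θ̂), and suppose e^{-a} is integrable with a(θ) - a(θ̂) ≥ c‖θ - θ̂‖ outside a compact set. Then n^{m/2} e^{n a(θ̂)} ∫ (θ - θ̂) exp{-n a(θ)} dθ → 0 as n → ∞; i.e., the posterior mean -D_β h/h converges to the mode θ̂ faster than the width n^{-1/2}. -/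
open Filter MeasureTheory
open scoped RealInnerProductSpace


lemma aux_mul_exp_le {c t : ℝ} (hc : 0 < c) (ht : 0 ≤ t) : t * Real.exp (-(c * t)) ≤ 1 / c := by
  have hE := Real.add_one_le_exp (c * t)
  have h2 : (0:ℝ) < Real.exp (c * t) := Real.exp_pos _
  have h3 : t ≤ Real.exp (c * t) / c := by
    rw [le_div_iff₀ hc]; nlinarith
  calc t * Real.exp (-(c * t)) ≤ (Real.exp (c * t) / c) * Real.exp (-(c * t)) :=
        mul_le_mul_of_nonneg_right h3 (Real.exp_nonneg _)
    _ = 1 / c := by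
        rw [Real.exp_neg]; field_simp

lemma aux_gauss_integrable {m : ℕ} {b : ℝ} (hb : 0 < b) :
    Integrable (fun v : EuclideanSpace ℝ (Fin m) => Real.exp (-b * ‖v‖ ^ 2)) := by
  have h := (GaussianFourier.integrable_cexp_neg_mul_sq_norm_add (V := EuclideanSpace ℝ (Fin m))
    (b := (b : ℂ)) (by simpa using hb) 0 0).norm
  have : (fun v : EuclideanSpace ℝ (Fin m) => ‖Complex.exp (-(b:ℂ) * (‖v‖:ℂ) ^ 2 + 0 * ⟪(0 : EuclideanSpace ℝ (Fin m)), v⟫)‖)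
      = fun v : EuclideanSpace ℝ (Fin m) => Real.exp (-b * ‖v‖ ^ 2) := by
    funext v
    rw [Complex.norm_exp]
    norm_num
    left
    norm_cast
  rwa [this] at h

lemma aux_norm_gauss_integrable {m : ℕ} {b : ℝ} (hb : 0 < b) :
    Integrable (fun v : EuclideanSpace ℝ (Fin m) => ‖v‖ * Real.exp (-b * ‖v‖ ^ 2)) := by
  have hg := (aux_gauss_integrable (m := m) (hb := half_pos hb)).const_mul (max 1 (2 / b))
  refine hg.mono' ?_ ?_
  · exact (continuous_norm.mul (by continuity)).aestronglyMeasurable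
  · refine Filter.Eventually.of_forall fun v => ?_
    have hnn : (0:ℝ) ≤ ‖v‖ * Real.exp (-b * ‖v‖ ^ 2) := by positivity
    rw [Real.norm_of_nonneg hnn]
    have hsplit : Real.exp (-b * ‖v‖ ^ 2)
        = Real.exp (-(b/2) * ‖v‖ ^ 2) * Real.exp (-(b/2) * ‖v‖ ^ 2) := by
      rw [← Real.exp_add]; ring_nf
    have hkey : ‖v‖ * Real.exp (-(b/2) * ‖v‖ ^ 2) ≤ max 1 (2 / b) := by
      rcases le_or_gt ‖v‖ 1 with h1 | h1
      · calc ‖v‖ * Real.exp (-(b/2) * ‖v‖ ^ 2) ≤ 1 * 1 := by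
              apply mul_le_mul h1 (Real.exp_le_one_iff.2 (by nlinarith [sq_nonneg ‖v‖])) (Real.exp_nonneg _) zero_le_one
          _ ≤ max 1 (2 / b) := by simp
      · have h2 : ‖v‖ * Real.exp (-(b/2) * ‖v‖ ^ 2) ≤ ‖v‖ ^ 2 * Real.exp (-(b/2) * ‖v‖ ^ 2) := by
          have : ‖v‖ ≤ ‖v‖ ^ 2 := by nlinarith
          exact mul_le_mul_of_nonneg_right this (Real.exp_nonneg _)
        have h3 : ‖v‖ ^ 2 * Real.exp (-((b/2) * ‖v‖ ^ 2)) ≤ 1 / (b/2) :=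
          aux_mul_exp_le (half_pos hb) (by positivity)
        have h4 : (1:ℝ) / (b/2) = 2 / b := by field_simp
        calc ‖v‖ * Real.exp (-(b/2) * ‖v‖ ^ 2) ≤ ‖v‖ ^ 2 * Real.exp (-(b/2) * ‖v‖ ^ 2) := h2
          _ ≤ 2 / b := by rw [show -(b/2) * ‖v‖^2 = -((b/2) * ‖v‖^2) by ring]; rw [← h4]; exact h3
          _ ≤ max 1 (2 / b) := le_max_right _ _
    calc ‖v‖ * Real.exp (-b * ‖v‖ ^ 2)
        = (‖v‖ * Real.exp (-(b/2) * ‖v‖ ^ 2)) * Real.exp (-(b/2) * ‖v‖ ^ 2) := by rw [hsplit]; ring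
      _ ≤ max 1 (2 / b) * Real.exp (-(b/2) * ‖v‖ ^ 2) :=
          mul_le_mul_of_nonneg_right hkey (Real.exp_nonneg _)

set_option maxHeartbeats 1000000 in
/-- Multidimensional Laplace estimate for the first moment: for a smooth strictly convex
coercive `a` with unique minimizer `θ̂` and positive definite Hessian,
`n^{m/2} e^{n a(θ̂)} ∫ (θ - θ̂) e^{-n a(θ)} dθ → 0`; i.e. the mean of the density proportional
to `e^{-na}` converges to the mode faster than the width `n^{-1/2}`. -/
theorem stmt13 {m : ℕ} (a : EuclideanSpace ℝ (Fin m) → ℝ) (ha : ContDiff ℝ (⊤ : ℕ∞) a)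
    (hconv : StrictConvexOn ℝ Set.univ a)
    (θhat : EuclideanSpace ℝ (Fin m)) (hmin : ∀ θ, θ ≠ θhat → a θhat < a θ)
    (H : EuclideanSpace ℝ (Fin m) →L[ℝ] EuclideanSpace ℝ (Fin m))
    (hH : HasFDerivAt (gradient a) H θhat)
    (hpd : ∀ w : EuclideanSpace ℝ (Fin m), w ≠ 0 → 0 < ⟪w, H w⟫)
    (hint : Integrable (fun θ => Real.exp (-a θ)) (volume : Measure (EuclideanSpace ℝ (Fin m))))
    (c : ℝ) (hc : 0 < c) (K : Set (EuclideanSpace ℝ (Fin m))) (hK : IsCompact K)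
    (hgrowth : ∀ θ ∉ K, c * ‖θ - θhat‖ ≤ a θ - a θhat) :
    Tendsto (fun n : ℕ =>
        ((n : ℝ) ^ ((m : ℝ) / 2) * Real.exp ((n : ℝ) * a θhat)) •
          ∫ θ, Real.exp (-(n : ℝ) * a θ) • (θ - θhat))
      atTop (nhds (0 : EuclideanSpace ℝ (Fin m))) := by
  rcases subsingleton_or_nontrivial (EuclideanSpace ℝ (Fin m)) with hsub | hnt
  · have hz : ∀ n : ℕ, ((n : ℝ) ^ ((m : ℝ) / 2) * Real.exp ((n : ℝ) * a θhat)) •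
          ∫ θ, Real.exp (-(n : ℝ) * a θ) • (θ - θhat) = (0 : EuclideanSpace ℝ (Fin m)) := by
      intro n
      have h0 : (fun θ : EuclideanSpace ℝ (Fin m) => Real.exp (-(n : ℝ) * a θ) • (θ - θhat))
          = fun _ => (0 : EuclideanSpace ℝ (Fin m)) := by
        funext θ; rw [Subsingleton.elim θ θhat]; simp
      rw [h0, integral_zero, smul_zero]
    simp only [hz]
    exact tendsto_const_nhds
  -- basic facts
  have hconv' : ConvexOn ℝ Set.univ a := hconv.convexOn
  have hdiff : Differentiable ℝ a := ha.differentiable (by simp)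
  have hcont : Continuous a := ha.continuous
  have hmin' : ∀ θ, a θhat ≤ a θ := by
    intro θ
    rcases eq_or_ne θ θhat with rfl | h
    · exact le_refl _
    · exact (hmin θ h).le
  set Δ : EuclideanSpace ℝ (Fin m) → ℝ := fun θ => a θ - a θhat with hΔdef
  have hΔ0 : ∀ θ, 0 ≤ Δ θ := fun θ => sub_nonneg.2 (hmin' θ)
  have hΔcont : Continuous Δ := hcont.sub continuous_const
  -- gradient at minimizer vanishes
  have hgrad0 : gradient a θhat = 0 := by
    have h1 : IsLocalMin a θhat := Filter.Eventually.of_forall hmin'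
    have h2 : fderiv ℝ a θhat = 0 := h1.fderiv_eq_zero
    simp [gradient, h2]
  have hinner : ∀ (y v : EuclideanSpace ℝ (Fin m)), ⟪gradient a y, v⟫ = fderiv ℝ a y v := by
    intro y v
    exact InnerProductSpace.toDual_symm_apply
  -- smallest eigenvalue bound
  obtain ⟨lam, hlam, hquadH⟩ :
      ∃ lam : ℝ, 0 < lam ∧ ∀ w : EuclideanSpace ℝ (Fin m), lam * ‖w‖ ^ 2 ≤ ⟪w, H w⟫ := by
    have hsph : (Metric.sphere (0 : EuclideanSpace ℝ (Fin m)) 1).Nonempty :=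
      NormedSpace.sphere_nonempty.mpr zero_le_one
    have hcontf : Continuous fun w : EuclideanSpace ℝ (Fin m) => ⟪w, H w⟫ :=
      continuous_id.inner H.continuous
    obtain ⟨w0, hw0mem, hw0min⟩ :=
      (isCompact_sphere (0 : EuclideanSpace ℝ (Fin m)) 1).exists_isMinOn hsph hcontf.continuousOn
    have hw0norm : ‖w0‖ = 1 := by simpa using hw0mem
    have hw0ne : w0 ≠ 0 := by
      intro h0; rw [h0, norm_zero] at hw0norm; norm_num at hw0norm
    refine ⟨⟪w0, H w0⟫, hpd w0 hw0ne, ?_⟩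
    intro w
    rcases eq_or_ne w 0 with rfl | hw
    · simp
    · have hwpos : 0 < ‖w‖ := norm_pos_iff.2 hw
      set u : EuclideanSpace ℝ (Fin m) := ‖w‖⁻¹ • w with hu
      have hunorm : ‖u‖ = 1 := by
        rw [hu, norm_smul, norm_inv, norm_norm, inv_mul_cancel₀ (ne_of_gt hwpos)]
      have humem : u ∈ Metric.sphere (0 : EuclideanSpace ℝ (Fin m)) 1 := by
        simpa using hunorm
      have h1 : ⟪w0, H w0⟫ ≤ ⟪u, H u⟫ := hw0min humem
      have h2 : ⟪u, H u⟫ = ‖w‖⁻¹ * (‖w‖⁻¹ * ⟪w, H w⟫) := by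
        rw [hu, _root_.map_smul, real_inner_smul_left, real_inner_smul_right]
      rw [h2] at h1
      have h3 := mul_le_mul_of_nonneg_left h1 (sq_nonneg ‖w‖)
      calc ⟪w0, H w0⟫ * ‖w‖ ^ 2 ≤ ‖w‖ ^ 2 * (‖w‖⁻¹ * (‖w‖⁻¹ * ⟪w, H w⟫)) := by
            rw [mul_comm]; exact h3
        _ = ⟪w, H w⟫ := by field_simp
  -- radius for the little-o bound on the gradient
  obtain ⟨r, hr, hgrad_approx⟩ : ∃ r : ℝ, 0 < r ∧ ∀ x : EuclideanSpace ℝ (Fin m), ‖x - θhat‖ ≤ r →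
      ‖gradient a x - H (x - θhat)‖ ≤ lam / 2 * ‖x - θhat‖ := by
    have hlo := hH.isLittleO
    have hev := hlo.def (show (0:ℝ) < lam / 2 by positivity)
    rw [Metric.eventually_nhds_iff] at hev
    obtain ⟨ε, hε, hball⟩ := hev
    refine ⟨ε / 2, by positivity, fun x hx => ?_⟩
    have hx' : dist x θhat < ε := by
      rw [dist_eq_norm]; linarith
    have := hball hx'
    simpa [hgrad0] using this
  -- quadratic lower bound near the minimum
  have hquad : ∀ θ : EuclideanSpace ℝ (Fin m), ‖θ - θhat‖ ≤ r → lam / 8 * ‖θ - θhat‖ ^ 2 ≤ Δ θ := by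
    intro θ hθr
    set h : EuclideanSpace ℝ (Fin m) := θ - θhat with hh
    set g : ℝ → ℝ := fun t => a (t • h + θhat) with hgdef
    have hgconv : ConvexOn ℝ Set.univ g := by
      have h1 := hconv'.comp_affineMap (AffineMap.lineMap θhat (θhat + h))
      rw [Set.preimage_univ] at h1
      have heq : (a ∘ (AffineMap.lineMap θhat (θhat + h))) = g := by
        funext t
        simp only [Function.comp_apply, AffineMap.lineMap_apply, hgdef]
        congr 1
        simp [add_sub_cancel_left]
      rwa [heq] at h1
    have hgderiv : ∀ t : ℝ, HasDerivAt g ⟪gradient a (t • h + θhat), h⟫ t := by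
      intro t
      have hcurve : HasDerivAt (fun t : ℝ => t • h + θhat) h t := by
        simpa using ((hasDerivAt_id t).smul_const h).add_const θhat
      have hf := (hdiff (t • h + θhat)).hasFDerivAt
      have hcomp := hf.comp_hasDerivAt t hcurve
      rw [hinner]
      exact hcomp
    set y : EuclideanSpace ℝ (Fin m) := (1/2 : ℝ) • h + θhat with hy
    have hysub : y - θhat = (1/2 : ℝ) • h := by rw [hy]; abel
    have hynorm : ‖y - θhat‖ ≤ r := by
      rw [hysub, norm_smul, Real.norm_eq_abs]
      have : |(1/2 : ℝ)| * ‖h‖ ≤ 1 * ‖h‖ := by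
        apply mul_le_mul_of_nonneg_right _ (norm_nonneg _); rw [abs_of_pos]; norm_num; norm_num
      calc |(1/2 : ℝ)| * ‖h‖ ≤ 1 * ‖h‖ := this
        _ = ‖h‖ := one_mul _
        _ ≤ r := hθr
    have happrox := hgrad_approx y hynorm
    rw [hysub] at happrox
    have hnsmul : ‖(1/2 : ℝ) • h‖ = 1/2 * ‖h‖ := by
      rw [norm_smul, Real.norm_eq_abs, abs_of_pos (by norm_num : (0:ℝ) < 1/2)]
    rw [hnsmul] at happrox
    -- happrox : ‖gradient a y - H ((1/2)•h)‖ ≤ lam/2 * (1/2 * ‖h‖)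
    have hdecomp : ⟪gradient a y, h⟫
        = ⟪H ((1/2:ℝ) • h), h⟫ + ⟪gradient a y - H ((1/2:ℝ) • h), h⟫ := by
      rw [← inner_add_left]
      congr 1
      abel
    have hinner1 : ⟪H ((1/2:ℝ) • h), h⟫ = 1/2 * ⟪h, H h⟫ := by
      rw [_root_.map_smul, real_inner_smul_left, real_inner_comm]
    have hCS : |⟪gradient a y - H ((1/2:ℝ) • h), h⟫|
        ≤ ‖gradient a y - H ((1/2:ℝ) • h)‖ * ‖h‖ := abs_real_inner_le_norm _ _
    have hHh := hquadH h
    have hslope := hgconv.le_slope_of_hasDerivAt (Set.mem_univ (1/2 : ℝ)) (Set.mem_univ (1:ℝ))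
      (by norm_num) (hgderiv (1/2))
    rw [slope_def_field] at hslope
    -- hslope : ⟪gradient a ((1/2)•h + θhat), h⟫ ≤ (g 1 - g (1/2)) / (1 - 1/2)
    have hg1 : g 1 = a θ := by
      rw [hgdef]; simp only [one_smul, hh]
      congr 1
      abel
    have hg2 : a θhat ≤ g (1/2) := hmin' _
    have hgy : ((1:ℝ)/2) • h + θhat = y := by rw [hy]
    rw [hgy] at hslope
    have hE1 : ⟪gradient a y - H ((1/2:ℝ) • h), h⟫ ≥ -(lam/2 * (1/2 * ‖h‖) * ‖h‖) := by
      have := neg_abs_le ⟪gradient a y - H ((1/2:ℝ) • h), h⟫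
      have h2 := mul_le_mul_of_nonneg_right happrox (norm_nonneg h)
      nlinarith [abs_nonneg ⟪gradient a y - H ((1/2:ℝ) • h), h⟫]
    have hnn : (0:ℝ) ≤ ‖h‖ ^ 2 := sq_nonneg _
    have hsq : ‖h‖ * ‖h‖ = ‖h‖ ^ 2 := by ring
    -- combine everything
    have hkey : lam / 4 * ‖h‖ ^ 2 ≤ ⟪gradient a y, h⟫ := by
      rw [hdecomp, hinner1]
      nlinarith
    have hΔθ : Δ θ = g 1 - a θhat := by rw [hg1, hΔdef]
    rw [hΔθ]
    have hhalf : (1:ℝ) - 1/2 = 1/2 := by norm_num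
    rw [hhalf] at hslope
    -- hslope : ⟪gradient a y, h⟫ ≤ (g 1 - g (1/2)) / (1/2)
    have : lam / 4 * ‖h‖ ^ 2 ≤ (g 1 - g (1/2)) * 2 := by
      have := le_trans hkey hslope
      linarith [this, (by ring : ((g 1 - g (1/2)) / (1/2) = (g 1 - g (1/2)) * 2))]
    linarith
  -- linear lower bound away from the minimum
  obtain ⟨c', hc', hlin⟩ : ∃ c' : ℝ, 0 < c' ∧ ∀ θ : EuclideanSpace ℝ (Fin m), r ≤ ‖θ - θhat‖ → c' * ‖θ - θhat‖ ≤ Δ θ := by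
    obtain ⟨R₀, hR₀⟩ := hK.isBounded.subset_closedBall θhat
    set R : ℝ := max R₀ r with hRdef
    have hrR : r ≤ R := le_max_right _ _
    have hR0 : 0 < R := lt_of_lt_of_le hr hrR
    set A : Set (EuclideanSpace ℝ (Fin m)) := Metric.closedBall θhat R \ Metric.ball θhat r with hAdef
    have hAc : IsCompact A := (isCompact_closedBall θhat R).diff Metric.isOpen_ball
    have hAne : A.Nonempty := by
      obtain ⟨w0, hw0⟩ := NormedSpace.sphere_nonempty
        (E := EuclideanSpace ℝ (Fin m)) (x := 0) (r := 1) |>.mpr zero_le_one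
      have hw0n : ‖w0‖ = 1 := by simpa using hw0
      refine ⟨θhat + r • w0, ?_, ?_⟩
      · rw [Metric.mem_closedBall, dist_eq_norm, add_sub_cancel_left, norm_smul, hw0n,
          mul_one, Real.norm_eq_abs, abs_of_pos hr]
        exact hrR
      · rw [Metric.mem_ball, dist_eq_norm, add_sub_cancel_left, norm_smul, hw0n,
          mul_one, Real.norm_eq_abs, abs_of_pos hr]
        exact lt_irrefl r
    obtain ⟨θ₀, hθ₀A, hθ₀min⟩ := hAc.exists_isMinOn hAne hΔcont.continuousOn
    have hθ₀ne : θ₀ ≠ θhat := by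
      intro hcontra
      apply hθ₀A.2
      rw [hcontra]
      exact Metric.mem_ball_self hr
    have hδ : 0 < Δ θ₀ := sub_pos.2 (hmin θ₀ hθ₀ne)
    refine ⟨min c (Δ θ₀ / R), lt_min hc (div_pos hδ hR0), fun θ hθ => ?_⟩
    rcases le_or_gt ‖θ - θhat‖ R with hle | hgt
    · have hmem : θ ∈ A := by
        constructor
        · rw [Metric.mem_closedBall, dist_eq_norm]; exact hle
        · rw [Metric.mem_ball, dist_eq_norm]; exact not_lt.2 hθ
      have h1 : Δ θ₀ ≤ Δ θ := hθ₀min hmem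
      have h2 : min c (Δ θ₀ / R) * ‖θ - θhat‖ ≤ (Δ θ₀ / R) * R :=
        mul_le_mul (min_le_right _ _) hle (norm_nonneg _) (le_of_lt (div_pos hδ hR0))
      calc min c (Δ θ₀ / R) * ‖θ - θhat‖ ≤ (Δ θ₀ / R) * R := h2
        _ = Δ θ₀ := div_mul_cancel₀ _ (ne_of_gt hR0)
        _ ≤ Δ θ := h1
    · have hnotK : θ ∉ K := by
        intro hmem
        have h1 := hR₀ hmem
        rw [Metric.mem_closedBall, dist_eq_norm] at h1
        have h2 : ‖θ - θhat‖ ≤ R := le_trans h1 (le_max_left _ _)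
        linarith
      calc min c (Δ θ₀ / R) * ‖θ - θhat‖ ≤ c * ‖θ - θhat‖ :=
            mul_le_mul_of_nonneg_right (min_le_left _ _) (norm_nonneg _)
        _ ≤ Δ θ := hgrowth θ hnotK
  -- uniform bound on ‖x‖ e^{-Δ}
  set M : ℝ := max r (1 / c') with hMdef
  have hM0 : 0 < M := lt_max_of_lt_left hr
  have hM : ∀ θ : EuclideanSpace ℝ (Fin m), ‖θ - θhat‖ * Real.exp (-Δ θ) ≤ M := by
    intro θ
    rcases le_or_gt ‖θ - θhat‖ r with hle | hgt
    · calc ‖θ - θhat‖ * Real.exp (-Δ θ) ≤ r * 1 :=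
            mul_le_mul hle (Real.exp_le_one_iff.2 (neg_nonpos.2 (hΔ0 θ)))
              (Real.exp_nonneg _) hr.le
        _ = r := mul_one r
        _ ≤ M := le_max_left _ _
    · have h1 : Real.exp (-Δ θ) ≤ Real.exp (-(c' * ‖θ - θhat‖)) :=
        Real.exp_le_exp.2 (neg_le_neg (hlin θ hgt.le))
      calc ‖θ - θhat‖ * Real.exp (-Δ θ) ≤ ‖θ - θhat‖ * Real.exp (-(c' * ‖θ - θhat‖)) :=
            mul_le_mul_of_nonneg_left h1 (norm_nonneg _)
        _ ≤ 1 / c' := aux_mul_exp_le hc' (norm_nonneg _)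
        _ ≤ M := le_max_right _ _
  -- exponential integrability
  have hEΔ : Integrable (fun θ : EuclideanSpace ℝ (Fin m) => Real.exp (-Δ θ)) := by
    have : (fun θ : EuclideanSpace ℝ (Fin m) => Real.exp (-Δ θ)) = fun θ => Real.exp (a θhat) * Real.exp (-a θ) := by
      funext θ; rw [← Real.exp_add]; congr 1; simp [hΔdef]; ring
    rw [this]; exact hint.const_mul _
  set J : ℝ := ∫ θ : EuclideanSpace ℝ (Fin m), Real.exp (-Δ θ) with hJdef
  have hJ0 : 0 ≤ J := integral_nonneg fun θ => Real.exp_nonneg _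
  -- the scaled integrals
  set μ : ℝ := lam / 8 with hμdef
  have hμ : 0 < μ := by positivity
  set I : ℝ := ∫ v : EuclideanSpace ℝ (Fin m), ‖v‖ * Real.exp (-μ * ‖v‖ ^ 2) with hIdef
  have hI0 : 0 ≤ I := integral_nonneg fun v => by positivity
  -- integrability of the moment integrand, n ≥ 2
  have hφint : ∀ n : ℕ, 2 ≤ n →
      Integrable (fun θ : EuclideanSpace ℝ (Fin m) => Real.exp (-(n : ℝ) * Δ θ) * ‖θ - θhat‖) := by
    intro n hn
    refine (hEΔ.const_mul M).mono' ?_ ?_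
    · apply Continuous.aestronglyMeasurable
      apply Continuous.mul
      · exact Real.continuous_exp.comp (continuous_const.mul hΔcont)
      · exact (continuous_id.sub continuous_const).norm
    · refine Filter.Eventually.of_forall fun θ => ?_
      have hnn : (0:ℝ) ≤ Real.exp (-(n : ℝ) * Δ θ) * ‖θ - θhat‖ := by positivity
      rw [Real.norm_of_nonneg hnn]
      have h2n : (2:ℝ) ≤ (n:ℝ) := by exact_mod_cast hn
      have h1 : Real.exp (-(n:ℝ) * Δ θ) ≤ Real.exp (-2 * Δ θ) := by
        apply Real.exp_le_exp.2
        nlinarith [hΔ0 θ]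
      calc Real.exp (-(n:ℝ) * Δ θ) * ‖θ - θhat‖
          ≤ Real.exp (-2 * Δ θ) * ‖θ - θhat‖ := mul_le_mul_of_nonneg_right h1 (norm_nonneg _)
        _ = Real.exp (-Δ θ) * (‖θ - θhat‖ * Real.exp (-Δ θ)) := by
            rw [show (-2 : ℝ) * Δ θ = -Δ θ + -Δ θ by ring, Real.exp_add]; ring
        _ ≤ Real.exp (-Δ θ) * M := mul_le_mul_of_nonneg_left (hM θ) (Real.exp_nonneg _)
        _ = M * Real.exp (-Δ θ) := mul_comm _ _
  -- Gaussian scaling identity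
  have hscale : ∀ n : ℕ, 1 ≤ n →
      ∫ θ : EuclideanSpace ℝ (Fin m), ‖θ - θhat‖ * Real.exp (-((n : ℝ) * μ) * ‖θ - θhat‖ ^ 2)
        = (Real.sqrt n)⁻¹ * ((Real.sqrt n) ^ m)⁻¹ * I := by
    intro n hn
    have hn0 : (0:ℝ) < (n:ℝ) := by exact_mod_cast hn
    have hsq : (0:ℝ) ≤ Real.sqrt n := Real.sqrt_nonneg _
    have hsn : Real.sqrt (n:ℝ) ≠ 0 := ne_of_gt (Real.sqrt_pos.2 hn0)
    have htrans : (∫ θ : EuclideanSpace ℝ (Fin m), ‖θ - θhat‖ * Real.exp (-((n : ℝ) * μ) * ‖θ - θhat‖ ^ 2))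
        = ∫ v : EuclideanSpace ℝ (Fin m), ‖v‖ * Real.exp (-((n : ℝ) * μ) * ‖v‖ ^ 2) :=
      integral_sub_right_eq_self (fun v => ‖v‖ * Real.exp (-((n : ℝ) * μ) * ‖v‖ ^ 2)) θhat
    rw [htrans]
    have hcv := MeasureTheory.Measure.integral_comp_smul_of_nonneg (volume)
      (fun v : EuclideanSpace ℝ (Fin m) => ‖v‖ * Real.exp (-μ * ‖v‖ ^ 2)) (Real.sqrt n) (hR := hsq)
    simp only [finrank_euclideanSpace_fin, smul_eq_mul] at hcv
    have heq2 : (∫ v : EuclideanSpace ℝ (Fin m), Real.sqrt n * (‖v‖ * Real.exp (-((n:ℝ) * μ) * ‖v‖ ^ 2)))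
        = ∫ v : EuclideanSpace ℝ (Fin m), ‖Real.sqrt (n:ℝ) • v‖ * Real.exp (-μ * ‖Real.sqrt (n:ℝ) • v‖ ^ 2) := by
      congr 1
      funext v
      rw [norm_smul, Real.norm_eq_abs, abs_of_nonneg hsq, mul_pow, Real.sq_sqrt hn0.le]
      ring_nf
    have key : Real.sqrt n * (∫ v : EuclideanSpace ℝ (Fin m), ‖v‖ * Real.exp (-((n:ℝ) * μ) * ‖v‖ ^ 2))
        = ((Real.sqrt n) ^ m)⁻¹ * I := by
      rw [← integral_const_mul, heq2, hcv, hIdef]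
    have h3 : (Real.sqrt (n:ℝ))⁻¹ * (Real.sqrt (n:ℝ) * (∫ v : EuclideanSpace ℝ (Fin m), ‖v‖ * Real.exp (-((n:ℝ) * μ) * ‖v‖ ^ 2)))
        = ∫ v : EuclideanSpace ℝ (Fin m), ‖v‖ * Real.exp (-((n:ℝ) * μ) * ‖v‖ ^ 2) := by
      rw [← mul_assoc, inv_mul_cancel₀ hsn, one_mul]
    rw [← h3, key]
    ring
  -- main estimate
  have hmain : ∀ n : ℕ, 2 ≤ n →
      ‖((n : ℝ) ^ ((m : ℝ) / 2) * Real.exp ((n : ℝ) * a θhat)) •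
          ∫ θ, Real.exp (-(n : ℝ) * a θ) • (θ - θhat)‖
        ≤ (n : ℝ) ^ (-(1 : ℝ) / 2) * I
          + ((n : ℝ) ^ m * Real.exp (-(c' * r) * n)) * (Real.exp (2 * (c' * r)) * M * J) := by
    intro n hn
    have hn1 : (1:ℝ) ≤ (n:ℝ) := by exact_mod_cast le_trans (by norm_num) hn
    have hn0 : (0:ℝ) < (n:ℝ) := lt_of_lt_of_le one_pos hn1
    have h2n : (2:ℝ) ≤ (n:ℝ) := by exact_mod_cast hn
    set s : Set (EuclideanSpace ℝ (Fin m)) := Metric.closedBall θhat r with hs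
    have hsmeas : MeasurableSet s := measurableSet_closedBall
    set φ : EuclideanSpace ℝ (Fin m) → ℝ := fun θ => Real.exp (-(n:ℝ) * Δ θ) * ‖θ - θhat‖ with hφ
    have hφI : Integrable φ := hφint n hn
    -- step A : bound the norm by the integral of φ
    have hA : ‖((n:ℝ) ^ ((m:ℝ)/2) * Real.exp ((n:ℝ) * a θhat)) •
          ∫ θ, Real.exp (-(n:ℝ) * a θ) • (θ - θhat)‖
        ≤ (n:ℝ) ^ ((m:ℝ)/2) * ∫ θ, φ θ := by
      rw [norm_smul, Real.norm_eq_abs, abs_of_nonneg (by positivity)]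
      have h1 : ‖∫ θ, Real.exp (-(n:ℝ) * a θ) • (θ - θhat)‖
          ≤ ∫ θ, Real.exp (-(n:ℝ) * a θ) * ‖θ - θhat‖ := by
        have h0 := norm_integral_le_integral_norm (μ := volume)
          (fun θ : EuclideanSpace ℝ (Fin m) => Real.exp (-(n:ℝ) * a θ) • (θ - θhat))
        have heqn : (fun θ : EuclideanSpace ℝ (Fin m) => ‖Real.exp (-(n:ℝ) * a θ) • (θ - θhat)‖)
            = fun θ : EuclideanSpace ℝ (Fin m) => Real.exp (-(n:ℝ) * a θ) * ‖θ - θhat‖ := by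
          funext θ
          rw [norm_smul, Real.norm_eq_abs, abs_of_nonneg (Real.exp_nonneg _)]
        rwa [heqn] at h0
      have h2 : Real.exp ((n:ℝ) * a θhat) * ∫ θ, Real.exp (-(n:ℝ) * a θ) * ‖θ - θhat‖
          = ∫ θ, φ θ := by
        rw [← integral_const_mul]
        congr 1
        funext θ
        show Real.exp ((n:ℝ) * a θhat) * (Real.exp (-(n:ℝ) * a θ) * ‖θ - θhat‖)
            = Real.exp (-(n:ℝ) * Δ θ) * ‖θ - θhat‖
        rw [← mul_assoc, ← Real.exp_add]
        have harg : (n:ℝ) * a θhat + -(n:ℝ) * a θ = -(n:ℝ) * Δ θ := by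
          simp only [hΔdef]; ring
        rw [harg]
      calc (n:ℝ) ^ ((m:ℝ)/2) * Real.exp ((n:ℝ) * a θhat) *
            ‖∫ θ, Real.exp (-(n:ℝ) * a θ) • (θ - θhat)‖
          ≤ (n:ℝ) ^ ((m:ℝ)/2) * Real.exp ((n:ℝ) * a θhat) *
            ∫ θ, Real.exp (-(n:ℝ) * a θ) * ‖θ - θhat‖ :=
            mul_le_mul_of_nonneg_left h1 (by positivity)
        _ = (n:ℝ) ^ ((m:ℝ)/2) * ∫ θ, φ θ := by rw [mul_assoc, h2]
    -- step B : split the integral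
    have hB : (∫ θ, φ θ) = (∫ θ in s, φ θ) + ∫ θ in sᶜ, φ θ :=
      (integral_add_compl hsmeas hφI).symm
    -- step C : inner bound
    set ψ : EuclideanSpace ℝ (Fin m) → ℝ :=
      fun θ => ‖θ - θhat‖ * Real.exp (-((n:ℝ) * μ) * ‖θ - θhat‖ ^ 2) with hψ
    have hψI : Integrable ψ :=
      (aux_norm_gauss_integrable (mul_pos hn0 hμ)).comp_sub_right θhat
    have hC : (∫ θ in s, φ θ) ≤ (Real.sqrt n)⁻¹ * ((Real.sqrt n) ^ m)⁻¹ * I := by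
      have hpt : ∀ θ ∈ s, φ θ ≤ ψ θ := by
        intro θ hθ
        have hθr : ‖θ - θhat‖ ≤ r := by
          rw [hs] at hθ; rwa [Metric.mem_closedBall, dist_eq_norm] at hθ
        have hq := hquad θ hθr
        have h1 : -(n:ℝ) * Δ θ ≤ -((n:ℝ) * μ) * ‖θ - θhat‖ ^ 2 := by
          have := mul_le_mul_of_nonneg_left hq hn0.le
          nlinarith
        calc φ θ = Real.exp (-(n:ℝ) * Δ θ) * ‖θ - θhat‖ := rfl
          _ ≤ Real.exp (-((n:ℝ) * μ) * ‖θ - θhat‖ ^ 2) * ‖θ - θhat‖ :=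
              mul_le_mul_of_nonneg_right (Real.exp_le_exp.2 h1) (norm_nonneg _)
          _ = ψ θ := mul_comm _ _
      have h2 : (∫ θ in s, φ θ) ≤ ∫ θ in s, ψ θ :=
        setIntegral_mono_on hφI.integrableOn hψI.integrableOn hsmeas hpt
      have h3 : (∫ θ in s, ψ θ) ≤ ∫ θ, ψ θ :=
        setIntegral_le_integral hψI (Filter.Eventually.of_forall fun θ => by positivity)
      have h4 := hscale n (le_trans (by norm_num) hn)
      calc (∫ θ in s, φ θ) ≤ ∫ θ in s, ψ θ := h2
        _ ≤ ∫ θ, ψ θ := h3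
        _ = (Real.sqrt n)⁻¹ * ((Real.sqrt n) ^ m)⁻¹ * I := h4
    -- step D : outer bound
    have hD : (∫ θ in sᶜ, φ θ) ≤ (M * Real.exp (-((n:ℝ) - 2) * (c' * r))) * J := by
      set C2 : ℝ := M * Real.exp (-((n:ℝ) - 2) * (c' * r)) with hC2
      have hC20 : 0 ≤ C2 := by positivity
      have hpt : ∀ θ ∈ sᶜ, φ θ ≤ C2 * Real.exp (-Δ θ) := by
        intro θ hθ
        have hθr : r ≤ ‖θ - θhat‖ := by
          rw [Set.mem_compl_iff, hs, Metric.mem_closedBall, dist_eq_norm, not_le] at hθ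
          exact hθ.le
        have hΔr : c' * r ≤ Δ θ :=
          le_trans (mul_le_mul_of_nonneg_left hθr hc'.le) (hlin θ hθr)
        have hcn2 : (0:ℝ) ≤ (n:ℝ) - 2 := by linarith
        have h1 : Real.exp (-((n:ℝ) - 2) * Δ θ) ≤ Real.exp (-((n:ℝ) - 2) * (c' * r)) :=
          Real.exp_le_exp.2 (by nlinarith)
        have hsplit : Real.exp (-(n:ℝ) * Δ θ)
            = Real.exp (-((n:ℝ) - 2) * Δ θ) * Real.exp (-Δ θ) * Real.exp (-Δ θ) := by
          rw [← Real.exp_add, ← Real.exp_add]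
          congr 1
          ring
        calc φ θ = Real.exp (-(n:ℝ) * Δ θ) * ‖θ - θhat‖ := rfl
          _ = Real.exp (-((n:ℝ) - 2) * Δ θ) * (‖θ - θhat‖ * Real.exp (-Δ θ))
              * Real.exp (-Δ θ) := by rw [hsplit]; ring
          _ ≤ Real.exp (-((n:ℝ) - 2) * (c' * r)) * M * Real.exp (-Δ θ) := by
              apply mul_le_mul_of_nonneg_right _ (Real.exp_nonneg _)
              exact mul_le_mul h1 (hM θ) (by positivity) (Real.exp_nonneg _)
          _ = C2 * Real.exp (-Δ θ) := by rw [hC2]; ring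
      have h2 : (∫ θ in sᶜ, φ θ) ≤ ∫ θ in sᶜ, C2 * Real.exp (-Δ θ) :=
        setIntegral_mono_on hφI.integrableOn (hEΔ.const_mul C2).integrableOn hsmeas.compl hpt
      have h3 : (∫ θ in sᶜ, C2 * Real.exp (-Δ θ)) ≤ ∫ θ, C2 * Real.exp (-Δ θ) :=
        setIntegral_le_integral (hEΔ.const_mul C2)
          (Filter.Eventually.of_forall fun θ => by positivity)
      have h4 : (∫ θ, C2 * Real.exp (-Δ θ)) = C2 * J := by
        rw [hJdef]; exact integral_const_mul _ _
      linarith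
    -- step E : combine
    have hpow : (Real.sqrt (n:ℝ)) ^ m = (n:ℝ) ^ ((m:ℝ)/2) := by
      rw [Real.sqrt_eq_rpow, ← Real.rpow_natCast ((n:ℝ) ^ ((1:ℝ)/2)) m, ← Real.rpow_mul hn0.le]
      congr 1
      ring
    have hrpow_ne : ((n:ℝ) ^ ((m:ℝ)/2)) ≠ 0 := ne_of_gt (Real.rpow_pos_of_pos hn0 _)
    have hprefac : (n:ℝ) ^ ((m:ℝ)/2) * ((Real.sqrt n)⁻¹ * ((Real.sqrt n) ^ m)⁻¹ * I)
        = (n:ℝ) ^ (-(1:ℝ)/2) * I := by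
      rw [hpow]
      rw [Real.sqrt_eq_rpow]
      rw [show ((n:ℝ) ^ ((1:ℝ)/2))⁻¹ = (n:ℝ) ^ (-((1:ℝ)/2)) by rw [Real.rpow_neg hn0.le]]
      have : (n:ℝ) ^ ((m:ℝ)/2) * ((n:ℝ) ^ (-((1:ℝ)/2)) * ((n:ℝ) ^ ((m:ℝ)/2))⁻¹ * I)
          = ((n:ℝ) ^ ((m:ℝ)/2) * ((n:ℝ) ^ ((m:ℝ)/2))⁻¹) * ((n:ℝ) ^ (-((1:ℝ)/2)) * I) := by ring
      rw [this, mul_inv_cancel₀ hrpow_ne, one_mul]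
      rw [show -(1:ℝ)/2 = -((1:ℝ)/2) by ring]
    have hexp2 : Real.exp (-((n:ℝ) - 2) * (c' * r))
        = Real.exp (2 * (c' * r)) * Real.exp (-(c' * r) * (n:ℝ)) := by
      rw [← Real.exp_add]
      congr 1
      ring
    have hple : (n:ℝ) ^ ((m:ℝ)/2) ≤ (n:ℝ) ^ m := by
      rw [← Real.rpow_natCast (n:ℝ) m]
      apply Real.rpow_le_rpow_of_exponent_le hn1
      have : (0:ℝ) ≤ (m:ℝ) := Nat.cast_nonneg m
      linarith
    have houter : (n:ℝ) ^ ((m:ℝ)/2) * ((M * Real.exp (-((n:ℝ) - 2) * (c' * r))) * J)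
        ≤ ((n:ℝ) ^ m * Real.exp (-(c' * r) * n)) * (Real.exp (2 * (c' * r)) * M * J) := by
      rw [hexp2]
      have hlhs : (n:ℝ) ^ ((m:ℝ)/2) * ((M * (Real.exp (2 * (c' * r)) * Real.exp (-(c' * r) * (n:ℝ)))) * J)
          = ((n:ℝ) ^ ((m:ℝ)/2) * Real.exp (-(c' * r) * n)) * (Real.exp (2 * (c' * r)) * M * J) := by
        ring
      rw [hlhs]
      apply mul_le_mul_of_nonneg_right _ (by positivity)
      exact mul_le_mul_of_nonneg_right hple (Real.exp_nonneg _)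
    have hφpos : 0 ≤ (n:ℝ) ^ ((m:ℝ)/2) := by positivity
    calc ‖((n:ℝ) ^ ((m:ℝ)/2) * Real.exp ((n:ℝ) * a θhat)) •
          ∫ θ, Real.exp (-(n:ℝ) * a θ) • (θ - θhat)‖
        ≤ (n:ℝ) ^ ((m:ℝ)/2) * ∫ θ, φ θ := hA
      _ = (n:ℝ) ^ ((m:ℝ)/2) * ((∫ θ in s, φ θ) + ∫ θ in sᶜ, φ θ) := by rw [hB]
      _ ≤ (n:ℝ) ^ ((m:ℝ)/2) * ((Real.sqrt n)⁻¹ * ((Real.sqrt n) ^ m)⁻¹ * I)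
          + (n:ℝ) ^ ((m:ℝ)/2) * ((M * Real.exp (-((n:ℝ) - 2) * (c' * r))) * J) := by
          rw [mul_add]
          exact add_le_add (mul_le_mul_of_nonneg_left hC hφpos)
            (mul_le_mul_of_nonneg_left hD hφpos)
      _ ≤ (n:ℝ) ^ (-(1:ℝ)/2) * I
          + ((n:ℝ) ^ m * Real.exp (-(c' * r) * n)) * (Real.exp (2 * (c' * r)) * M * J) := by
          rw [hprefac]
          exact add_le_add_right houter _
  -- conclusion by squeezing
  refine squeeze_zero_norm' (Filter.eventually_atTop.2 ⟨2, hmain⟩) ?_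
  have T1 : Tendsto (fun n : ℕ => (n:ℝ) ^ (-(1:ℝ)/2) * I) atTop (nhds 0) := by
    have h1 : Tendsto (fun x : ℝ => x ^ (-(1:ℝ)/2)) atTop (nhds 0) := by
      have h2 := tendsto_rpow_neg_atTop (y := (1:ℝ)/2) (by norm_num)
      have : (fun x : ℝ => x ^ (-((1:ℝ)/2))) = fun x : ℝ => x ^ (-(1:ℝ)/2) := by
        funext x; congr 1; ring
      rwa [this] at h2
    have h3 := (h1.comp tendsto_natCast_atTop_atTop).mul_const I
    rw [zero_mul] at h3
    exact h3
  have T2 : Tendsto (fun n : ℕ =>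
      ((n:ℝ) ^ m * Real.exp (-(c' * r) * n)) * (Real.exp (2 * (c' * r)) * M * J))
      atTop (nhds 0) := by
    have hs0pos : 0 < c' * r := mul_pos hc' hr
    have hbase : Tendsto (fun x : ℝ => x ^ m * Real.exp (-x)) atTop (nhds 0) :=
      Real.tendsto_pow_mul_exp_neg_atTop_nhds_zero m
    have hlin2 : Tendsto (fun x : ℝ => (c' * r) * x) atTop atTop :=
      Tendsto.const_mul_atTop hs0pos tendsto_id
    have hcomp := hbase.comp hlin2
    have hconst := hcomp.const_mul (((c' * r) ^ m)⁻¹)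
    rw [mul_zero] at hconst
    have hne : ((c' * r) ^ m) ≠ 0 := pow_ne_zero m (ne_of_gt hs0pos)
    have heq : (fun x : ℝ => ((c' * r) ^ m)⁻¹ * (((fun x : ℝ => x ^ m * Real.exp (-x)) ∘
          fun x : ℝ => (c' * r) * x) x))
        = fun x : ℝ => x ^ m * Real.exp (-(c' * r) * x) := by
      funext x
      simp only [Function.comp_apply]
      calc ((c' * r) ^ m)⁻¹ * (((c' * r) * x) ^ m * Real.exp (-((c' * r) * x)))
          = (((c' * r) ^ m)⁻¹ * (c' * r) ^ m) * (x ^ m * Real.exp (-((c' * r) * x))) := by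
            rw [mul_pow]; ring
        _ = x ^ m * Real.exp (-(c' * r) * x) := by
            rw [inv_mul_cancel₀ hne, one_mul, neg_mul]
    rw [heq] at hconst
    have h4 := (hconst.comp tendsto_natCast_atTop_atTop).mul_const
      (Real.exp (2 * (c' * r)) * M * J)
    rw [zero_mul] at h4
    exact h4
  have hsum := T1.add T2
  rw [add_zero] at hsum
  exact hsum
end

section
/- Let X be multivariate normal on ℝ^m with mean 0 and covariance Σ = (σ^{ij}). Then E[XᵢXⱼXₖX_s] = σ^{ij}σ^{ks} + σ^{ik}σ^{js} + σ^{is}σ^{jk} (Isserlis/Wick formula for the fourth central moment). -/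
/-!
Every linear functional `∑ aᵢ Xᵢ` is `N(0, aᵀΣa)`, and a centred Gaussian of variance `v` has
fourth moment `3 v²`: its moment generating function is `exp (v t² / 2)`, whose fourth derivative
at `0` is `3 v²`. The mixed moment is recovered from these fourth powers by polarization,
`192 x₁x₂x₃x₄ = ∑_{ε ∈ {±1}³} ε₂ε₃ε₄ (x₁ + ε₂x₂ + ε₃x₃ + ε₄x₄)⁴`, which leaves a polynomial identity
in the entries of the symmetric matrix `Σ`.
-/

open MeasureTheory ProbabilityTheory Real
open scoped NNReal

open Polynomial in
lemma deriv_eval_mul_exp_mul_sq_div_two (c : ℝ) (p : ℝ[X]) :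
    deriv (fun t ↦ p.eval t * rexp (c * t ^ 2 / 2)) =
      fun t ↦ (derivative p + C c * X * p).eval t * rexp (c * t ^ 2 / 2) := by
  funext t
  have he : HasDerivAt (fun t ↦ rexp (c * t ^ 2 / 2)) (rexp (c * t ^ 2 / 2) * (c * t)) t := by
    convert (((hasDerivAt_pow 2 t).const_mul c).div_const 2).exp using 1
    ring
  rw [((p.hasDerivAt t).fun_mul he).deriv]
  simp only [eval_add, eval_mul, eval_C, eval_X]
  ring

open Polynomial in
lemma iterate_deriv_exp_mul_sq_div_two (c : ℝ) (n : ℕ) :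
    deriv^[n] (fun t ↦ rexp (c * t ^ 2 / 2)) =
      fun t ↦ ((fun p ↦ derivative p + C c * X * p)^[n] 1).eval t * rexp (c * t ^ 2 / 2) := by
  induction n with
  | zero => simp
  | succ n ih =>
    rw [Function.iterate_succ_apply', ih, deriv_eval_mul_exp_mul_sq_div_two,
      Function.iterate_succ_apply']

section GaussianLaw

variable {Ω : Type*} [MeasurableSpace Ω] {P : Measure Ω} [IsProbabilityMeasure P] {Y : Ω → ℝ}
  {μ : ℝ} {v : ℝ≥0}

lemma integrableExpSet_eq_univ_of_map_eq_gaussianReal (hY : P.map Y = gaussianReal μ v) :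
    integrableExpSet Y P = Set.univ := by
  ext t
  simp only [integrableExpSet, Set.mem_ofPred_eq, Set.mem_univ, ← mgf_pos_iff,
    mgf_gaussianReal hY, Real.exp_pos]

lemma integrable_pow_of_map_eq_gaussianReal (hY : P.map Y = gaussianReal μ v) (n : ℕ) :
    Integrable (fun ω ↦ Y ω ^ n) P :=
  integrable_pow_of_mem_interior_integrableExpSet
    (by simp [integrableExpSet_eq_univ_of_map_eq_gaussianReal hY]) n

open Polynomial in
lemma integral_pow_four_of_map_eq_gaussianReal (hY : P.map Y = gaussianReal 0 v) :
    ∫ ω, Y ω ^ 4 ∂P = 3 * (v : ℝ) ^ 2 := by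
  have h0 : 0 ∈ interior (integrableExpSet Y P) := by
    simp [integrableExpSet_eq_univ_of_map_eq_gaussianReal hY]
  have hmgf : mgf Y P = fun t ↦ rexp (v * t ^ 2 / 2) := by
    funext t
    rw [mgf_gaussianReal hY, zero_mul, zero_add]
  have h := iteratedDeriv_mgf_zero h0 4
  simp only [hmgf, iteratedDeriv_eq_iterate, iterate_deriv_exp_mul_sq_div_two, Pi.pow_apply] at h
  rw [← h]
  simp only [Function.iterate_succ_apply', Function.iterate_zero_apply, derivative_one,
    derivative_add, derivative_mul, derivative_C, derivative_X, eval_add, eval_mul, eval_C, eval_X, mul_zero,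
    mul_one, zero_mul, zero_add, add_zero, ne_eq, OfNat.ofNat_ne_zero, not_false_eq_true,
    zero_pow, zero_div, exp_zero]
  ring

end GaussianLaw

lemma Matrix.PosSemidef.sum_sum_mul_mul_nonneg {ι : Type*} [Fintype ι] {A : Matrix ι ι ℝ}
    (hA : A.PosSemidef) (a : ι → ℝ) : 0 ≤ ∑ i, ∑ j, a i * a j * A i j := by
  refine (hA.dotProduct_mulVec_nonneg a).trans_eq ?_
  simp only [dotProduct, Matrix.mulVec, star_trivial, Finset.mul_sum]
  exact Finset.sum_congr rfl fun i _ ↦ Finset.sum_congr rfl fun j _ ↦ by ring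

open Finset in
lemma mul_mul_mul_eq_sum_signs {K : Type*} [Field K] [CharZero K] [DecidableEq K] (a b c d : K) :
    a * b * c * d = (∑ e ∈ ({1, -1} : Finset K) ×ˢ ({1, -1} : Finset K) ×ˢ ({1, -1} : Finset K),
      e.1 * e.2.1 * e.2.2 * (a + e.1 * b + e.2.1 * c + e.2.2 * d) ^ 4) / 192 := by
  simp only [sum_product, sum_pair (show (1 : K) ≠ -1 by norm_num)]
  ring

open Finset in
theorem integral_mul_mul_mul_eq_of_integral_pow_four {Ω ι : Type*} [MeasurableSpace Ω]
    {P : Measure Ω} [Fintype ι] [DecidableEq ι] {Y : Ω → ι → ℝ} {C : Matrix ι ι ℝ}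
    (hC : C.IsSymm) (hint : ∀ a : ι → ℝ, Integrable (fun ω ↦ (∑ p, a p * Y ω p) ^ 4) P)
    (hmoment : ∀ a : ι → ℝ,
      ∫ ω, (∑ p, a p * Y ω p) ^ 4 ∂P = 3 * (∑ p, ∑ q, a p * a q * C p q) ^ 2)
    (i j k s : ι) :
    ∫ ω, Y ω i * Y ω j * Y ω k * Y ω s ∂P = C i j * C k s + C i k * C j s + C i s * C j k := by
  set S := ({1, -1} : Finset ℝ) ×ˢ ({1, -1} : Finset ℝ) ×ˢ ({1, -1} : Finset ℝ)
  let a (e : ℝ × ℝ × ℝ) : ι → ℝ :=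
    Pi.single i 1 + e.1 • Pi.single j 1 + e.2.1 • Pi.single k 1 + e.2.2 • Pi.single s 1
  have ha (e : ℝ × ℝ × ℝ) (ω : Ω) :
      ∑ p, a e p * Y ω p = Y ω i + e.1 * Y ω j + e.2.1 * Y ω k + e.2.2 * Y ω s := by
    simp [a, add_mul, sum_add_distrib, Pi.single_apply]
  have hint_signed (e : ℝ × ℝ × ℝ) :
      Integrable (fun ω ↦ (Y ω i + e.1 * Y ω j + e.2.1 * Y ω k + e.2.2 * Y ω s) ^ 4) P := by
    simpa only [ha] using hint (a e)
  calc ∫ ω, Y ω i * Y ω j * Y ω k * Y ω s ∂P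
      = (∑ e ∈ S, e.1 * e.2.1 * e.2.2 *
          ∫ ω, (Y ω i + e.1 * Y ω j + e.2.1 * Y ω k + e.2.2 * Y ω s) ^ 4 ∂P) / 192 := by
        simp only [mul_mul_mul_eq_sum_signs (Y _ i), integral_div,
          integral_finsetSum _ fun e _ ↦ (hint_signed e).const_mul _, integral_const_mul, S]
    _ = (∑ e ∈ S, e.1 * e.2.1 * e.2.2 * (3 * (∑ p, ∑ q, a e p * a e q * C p q) ^ 2)) / 192 := by
        simp only [← ha, hmoment]
    _ = C i j * C k s + C i k * C j s + C i s * C j k := by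
        simp only [S, a, Pi.add_apply, Pi.single_apply, Pi.smul_apply, smul_eq_mul, mul_ite,
          ite_mul, mul_one, mul_zero, one_mul, zero_mul, mul_add, add_mul, mul_neg, neg_mul,
          neg_neg, sum_add_distrib, sum_ite_eq', mem_univ, ↓reduceIte, sum_product,
          sum_pair (show (1 : ℝ) ≠ -1 by norm_num)]
        rw [hC.apply i j, hC.apply i k, hC.apply i s, hC.apply j k, hC.apply j s, hC.apply k s]
        ring

theorem stmt18_general {m : ℕ} {Ω : Type*} [MeasureSpace Ω] (P : Measure Ω) [IsProbabilityMeasure P]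
    (X : Ω → Fin m → ℝ)
    (Sig : Matrix (Fin m) (Fin m) ℝ) (hsymm : Sig.IsSymm) (hpsd : Sig.PosSemidef)
    (hgauss : ∀ a : Fin m → ℝ,
      Measure.map (fun ω => ∑ i, a i * X ω i) P =
        gaussianReal 0 (Real.toNNReal (∑ i, ∑ j, a i * a j * Sig i j)))
    (i j k s : Fin m) :
    ∫ ω, X ω i * X ω j * X ω k * X ω s ∂P =
      Sig i j * Sig k s + Sig i k * Sig j s + Sig i s * Sig j k :=
  integral_mul_mul_mul_eq_of_integral_pow_four hsymm
    (fun a ↦ integrable_pow_of_map_eq_gaussianReal (hgauss a) 4)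
    (fun a ↦ by
      rw [integral_pow_four_of_map_eq_gaussianReal (hgauss a),
        Real.coe_toNNReal _ (hpsd.sum_sum_mul_mul_nonneg a)])
    i j k s

/-- Isserlis/Wick formula for fourth moments: if `X` is a centred multivariate normal vector
with covariance matrix `Σ` (characterized by every linear functional being gaussian with the
corresponding variance), then `E[XᵢXⱼXₖXₛ] = σⁱʲσᵏˢ + σⁱᵏσʲˢ + σⁱˢσʲᵏ`. -/
theorem stmt18 {m : ℕ} {Ω : Type*} [MeasureSpace Ω] (P : Measure Ω) [IsProbabilityMeasure P]
    (X : Ω → Fin m → ℝ) (hmeas : Measurable X)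
    (Sig : Matrix (Fin m) (Fin m) ℝ) (hsymm : Sig.IsSymm) (hpsd : Sig.PosSemidef)
    (hgauss : ∀ a : Fin m → ℝ,
      Measure.map (fun ω => ∑ i, a i * X ω i) P =
        gaussianReal 0 (Real.toNNReal (∑ i, ∑ j, a i * a j * Sig i j)))
    (i j k s : Fin m) :
    ∫ ω, X ω i * X ω j * X ω k * X ω s ∂P =
      Sig i j * Sig k s + Sig i k * Sig j s + Sig i s * Sig j k :=
  stmt18_general P X Sig hsymm hpsd hgauss i j k s
end
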